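/- Let p ≥ 2 be real and let κ_{1,p}(z) = ((1 + z)²/2)^{1/p} · exp((1 − 1/p)(z − 1)/(z + 1)) with Taylor expansion κ_{1,p}(z) = Σ_{n≥0} cₙ⁰ zⁿ on 𝔻. Then |c₁⁰| = (2/e)^{1 − 1/p}, and Σ_{n≥2} |cₙ⁰|² < 1/2 < |c₁⁰|². -/

import Mathlib

/-!
`κ_{1,p}(0) = 2^{-1/p} e^{1/p-1}` and `κ_{1,p}'(0) = 2 κ_{1,p}(0)`, so
`|c₁⁰| = 2 |c₀⁰| = (2/e)^{1-1/p}`, and `|c₁⁰|² ≥ (2/e)² > 1/2`. For the tail: on `|z| ≤ 1` the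
exponential factor has modulus at most one, so Bernoulli's inequality (with exponent `2/p ≤ 1`)
gives `|κ_{1,p}(z)|² ≤ (|1+z|²/2)^{2/p} ≤ 1 - 2/p + |1+z|²/p`, whose average over `|z| = r` is
`1 - 1/p + r²/p ≤ 1`. By Cauchy's formula the Fourier coefficients of `θ ↦ κ_{1,p}(re^{iθ})` are
`cₙ⁰ rⁿ`, so Parseval gives `Σ |cₙ⁰|² r^{2n} ≤ 1`; letting `r → 1`,
`Σ_{n≥2} |cₙ⁰|² ≤ 1 - |c₀⁰|² - |c₁⁰|² = 1 - 5|c₁⁰|²/4 < 3/8`.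
-/

open Complex Metric Set

noncomputable section

/-- The open unit disk in ℂ. -/
def unitDisk : Set ℂ := Metric.ball 0 1

/-- The `n`-th Taylor coefficient of `f` at the origin. -/
def coeff (f : ℂ → ℂ) (n : ℕ) : ℂ := iteratedDeriv n f 0 / (n.factorial : ℂ)

/-- The extremal function `κ_{1,p}(z) = ((1+z)²/2)^{1/p} exp((1-1/p)(z-1)/(z+1))`
(principal branch of the power). -/
def kappaOneP (p : ℝ) : ℂ → ℂ := fun z =>
  ((1 + z) ^ 2 / 2) ^ ((1 : ℂ) / (p : ℂ)) *
    Complex.exp ((1 - 1 / (p : ℂ)) * ((z - 1) / (z + 1)))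

open Real MeasureTheory

theorem fourierCoeffOn_comp_circleMap {f : ℂ → ℂ} {r : ℝ} (hr : 0 < r)
    (hf : DifferentiableOn ℂ f (closedBall 0 r)) (n : ℕ) :
    fourierCoeffOn two_pi_pos (fun θ => f (circleMap 0 r θ)) n = coeff f n * r ^ n := by
  have hr' : (r : ℂ) ≠ 0 := ofReal_ne_zero.mpr hr.ne'
  have hpt : ∀ θ : ℝ, fourier (-(n : ℤ)) (θ : AddCircle (2 * π - 0)) • f (circleMap 0 r θ) =
      ((r : ℂ) ^ n / I) • (deriv (circleMap 0 r) θ • (1 / (circleMap 0 r θ - 0) ^ (n + 1)) •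
        f (circleMap 0 r θ)) := by
    intro θ
    have he : Complex.exp (θ * I) ≠ 0 := Complex.exp_ne_zero _
    rw [deriv_circleMap, fourier_coe_apply, circleMap_zero, sub_zero, smul_eq_mul, smul_eq_mul,
      smul_eq_mul, smul_eq_mul, show 2 * π * I * ((-(n : ℤ) : ℤ) : ℂ) * θ / ((2 * π : ℝ) : ℂ)
        = -(n * (θ * I)) by push_cast; field_simp, Complex.exp_neg, Complex.exp_nat_mul]
    field_simp
    ring
  have hcauchy := hf.circleIntegral_one_div_sub_center_pow_smul hr n
  rw [circleIntegral] at hcauchy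
  rw [fourierCoeffOn_eq_integral, intervalIntegral.integral_congr (fun θ _ => hpt θ),
    intervalIntegral.integral_smul, hcauchy, coeff]
  have hπ : (π : ℂ) ≠ 0 := ofReal_ne_zero.mpr pi_ne_zero
  have hfac : (n.factorial : ℂ) ≠ 0 := Nat.cast_ne_zero.mpr n.factorial_ne_zero
  simp only [smul_eq_mul, real_smul, sub_zero]
  push_cast
  field_simp

theorem sum_range_sq_norm_coeff_mul_pow_le_circleAverage {f : ℂ → ℂ} {r : ℝ} (hr : 0 < r)
    (hf : DifferentiableOn ℂ f (closedBall 0 r)) (N : ℕ) :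
    ∑ n ∈ Finset.range N, ‖coeff f n‖ ^ 2 * r ^ (2 * n) ≤
      circleAverage (fun z => ‖f z‖ ^ 2) 0 r := by
  have hF : Continuous fun θ => f (circleMap 0 r θ) :=
    hf.continuousOn.comp_continuous (continuous_circleMap 0 r)
      (fun θ => circleMap_mem_closedBall 0 hr.le θ)
  have hL2 : MemLp (fun θ => f (circleMap 0 r θ)) 2 (volume.restrict (Ioc 0 (2 * π))) :=
    (memLp_two_iff_integrable_sq_norm hF.aestronglyMeasurable).2
      (hF.norm.pow 2).integrableOn_Ioc
  have hparseval := hasSum_sq_fourierCoeffOn two_pi_pos hL2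
  rw [sub_zero] at hparseval
  calc ∑ n ∈ Finset.range N, ‖coeff f n‖ ^ 2 * r ^ (2 * n)
      = ∑ i ∈ (Finset.range N).map Nat.castEmbedding,
          ‖fourierCoeffOn two_pi_pos (fun θ => f (circleMap 0 r θ)) i‖ ^ 2 := by
        rw [Finset.sum_map]
        refine Finset.sum_congr rfl fun n _ => ?_
        rw [Nat.castEmbedding_apply, fourierCoeffOn_comp_circleMap hr hf, norm_mul, norm_pow,
          norm_real, Real.norm_of_nonneg hr.le]
        ring
    _ ≤ _ := sum_le_hasSum _ (fun _ _ => by positivity) hparseval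

theorem sq_div_two_mem_slitPlane {w : ℂ} (hw : 0 < w.re) : w ^ 2 / 2 ∈ slitPlane := by
  rw [mem_slitPlane_iff]
  have hre : (w ^ 2 / 2).re = (w.re ^ 2 - w.im ^ 2) / 2 := by
    simp [pow_two, mul_re]
  have him : (w ^ 2 / 2).im = w.re * w.im := by
    simp [pow_two, mul_im]
    ring
  rcases eq_or_ne w.im 0 with h | h
  · left
    rw [hre, h]
    norm_num
    positivity
  · right
    rw [him]
    exact mul_ne_zero hw.ne' h

theorem differentiableOn_kappaOneP (p : ℝ) : DifferentiableOn ℂ (kappaOneP p) unitDisk := by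
  intro z hz
  rw [unitDisk, mem_ball_zero_iff] at hz
  have hre : 0 < (1 + z).re := by
    have := neg_lt_of_abs_lt ((abs_re_le_norm z).trans_lt hz)
    simp only [add_re, one_re]
    linarith
  have hz1 : z + 1 ≠ 0 := fun h => by rw [add_comm, h] at hre; simp at hre
  refine DifferentiableAt.differentiableWithinAt ?_
  unfold kappaOneP
  refine (DifferentiableAt.cpow_const
    ((by fun_prop : DifferentiableAt ℂ (fun z : ℂ => (1 + z) ^ 2) z).div_const 2)
    (sq_div_two_mem_slitPlane hre)).mul ?_
  exact DifferentiableAt.cexp (by fun_prop (disch := exact hz1))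

theorem norm_kappaOneP (p : ℝ) (z : ℂ) :
    ‖kappaOneP p z‖ =
      (‖1 + z‖ ^ 2 / 2) ^ (1 / p) * Real.exp ((1 - 1 / p) * ((z - 1) / (z + 1)).re) := by
  have h1 : (1 : ℂ) / p = ((1 / p : ℝ) : ℂ) := by push_cast; rfl
  have h2 : 1 - (1 : ℂ) / p = ((1 - 1 / p : ℝ) : ℂ) := by push_cast; rfl
  rw [kappaOneP, norm_mul, h2, h1, norm_cpow_real, norm_exp, re_ofReal_mul, norm_div, norm_pow,
    Complex.norm_two]

theorem re_sub_one_div_add_one_nonpos {z : ℂ} (hz : ‖z‖ ≤ 1) : ((z - 1) / (z + 1)).re ≤ 0 := by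
  have hnormSq : z.re * z.re + z.im * z.im ≤ 1 := by
    rw [← normSq_apply, ← Complex.sq_norm]
    nlinarith [norm_nonneg z]
  rw [div_re, ← add_div]
  apply div_nonpos_of_nonpos_of_nonneg _ (normSq_nonneg _)
  simp only [sub_re, sub_im, add_re, add_im, one_re, one_im]
  nlinarith

theorem sq_norm_kappaOneP_le {p : ℝ} (hp : 2 ≤ p) {z : ℂ} (hz : ‖z‖ ≤ 1) :
    ‖kappaOneP p z‖ ^ 2 ≤ 1 - 2 / p + ‖1 + z‖ ^ 2 / p := by
  have hp0 : 0 < p := by linarith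
  set x := ‖1 + z‖ ^ 2 / 2
  have hx : 0 ≤ x := by positivity
  have hexp : Real.exp ((1 - 1 / p) * ((z - 1) / (z + 1)).re) ≤ 1 := by
    refine Real.exp_le_one_iff.2
      (mul_nonpos_of_nonneg_of_nonpos ?_ (re_sub_one_div_add_one_nonpos hz))
    rw [sub_nonneg, div_le_one hp0]
    linarith
  have hle : ‖kappaOneP p z‖ ≤ x ^ (1 / p) := by
    rw [norm_kappaOneP]
    exact mul_le_of_le_one_right (by positivity) hexp
  have hbernoulli : x ^ (2 / p) ≤ 1 + 2 / p * (x - 1) := by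
    have := rpow_one_add_le_one_add_mul_self (s := x - 1) (by linarith) (p := 2 / p)
      (by positivity) (by rw [div_le_one hp0]; exact hp)
    rwa [add_sub_cancel] at this
  calc ‖kappaOneP p z‖ ^ 2 ≤ (x ^ (1 / p)) ^ 2 := pow_le_pow_left₀ (norm_nonneg _) hle 2
    _ = x ^ (2 / p) := by
      rw [← Real.rpow_natCast, ← Real.rpow_mul hx]
      ring_nf
    _ ≤ 1 + 2 / p * (x - 1) := hbernoulli
    _ = 1 - 2 / p + ‖1 + z‖ ^ 2 / p := by
      simp only [x]
      ring

theorem circleAverage_sq_norm_kappaOneP_le_one {p : ℝ} (hp : 2 ≤ p) {r : ℝ} (hr0 : 0 < r)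
    (hr1 : r < 1) : circleAverage (fun z => ‖kappaOneP p z‖ ^ 2) 0 r ≤ 1 := by
  -- On `|z| = r` the bound `1 - 2/p + |1 + z|²/p` is `re (g z)` for the affine map `g`, so its
  -- average is `re (g 0)` by the mean value property.
  set g : ℂ → ℂ := fun z => ((1 - 1 / p + r ^ 2 / p : ℝ) : ℂ) + ((2 / p : ℝ) : ℂ) * z
  have hg : Differentiable ℂ g := by fun_prop
  have hsphere : sphere (0 : ℂ) |r| ⊆ unitDisk := by
    rw [abs_of_pos hr0]
    exact sphere_subset_closedBall.trans (closedBall_subset_ball hr1)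
  have hκ : CircleIntegrable (fun z => ‖kappaOneP p z‖ ^ 2) 0 r :=
    (((differentiableOn_kappaOneP p).continuousOn.mono hsphere).norm.pow 2).circleIntegrable'
  have hbound : ∀ z ∈ sphere (0 : ℂ) |r|, ‖kappaOneP p z‖ ^ 2 ≤ (reCLM ∘ g) z := by
    intro z hz
    rw [mem_sphere_zero_iff_norm, abs_of_pos hr0] at hz
    have hsq : ‖1 + z‖ ^ 2 = 1 + 2 * z.re + r ^ 2 := by
      rw [Complex.sq_norm, normSq_apply, ← hz, Complex.sq_norm, normSq_apply]
      simp only [add_re, add_im, one_re, one_im]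
      ring
    calc ‖kappaOneP p z‖ ^ 2 ≤ 1 - 2 / p + ‖1 + z‖ ^ 2 / p :=
          sq_norm_kappaOneP_le hp (hz.le.trans hr1.le)
      _ = (reCLM ∘ g) z := by
        simp only [Function.comp_apply, reCLM_apply, g, add_re, re_ofReal_mul, ofReal_re, hsq]
        ring
  calc circleAverage (fun z => ‖kappaOneP p z‖ ^ 2) 0 r
      ≤ circleAverage (reCLM ∘ g) 0 r :=
        circleAverage_mono hκ
          (reCLM.continuous.comp hg.continuous).continuousOn.circleIntegrable' hbound
    _ = (g 0).re := by
        rw [reCLM.circleAverage_comp_comm hg.continuous.continuousOn.circleIntegrable',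
          hg.diffContOnCl.circleAverage, reCLM_apply]
    _ ≤ 1 := by
        have hp0 : 0 < p := by linarith
        have : r ^ 2 / p ≤ 1 / p := by gcongr; nlinarith
        simp only [g, mul_zero, add_zero, ofReal_re]
        linarith

theorem hasDerivAt_kappaOneP_zero (p : ℝ) : HasDerivAt (kappaOneP p) (2 * kappaOneP p 0) 0 := by
  set c : ℂ := 1 / p
  have hw : HasDerivAt (fun z : ℂ => (1 + z) ^ 2 / 2) 1 0 := by
    simpa using (((hasDerivAt_id (0 : ℂ)).const_add 1).pow 2).div_const 2
  have hv : HasDerivAt (fun z : ℂ => (1 - c) * ((z - 1) / (z + 1))) ((1 - c) * 2) 0 :=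
    ((((hasDerivAt_id' (0 : ℂ)).sub_const 1).fun_div ((hasDerivAt_id' (0 : ℂ)).add_const 1)
      (by norm_num)).const_mul (1 - c)).congr_deriv (by norm_num)
  have hslit : (1 + (0 : ℂ)) ^ 2 / 2 ∈ slitPlane := sq_div_two_mem_slitPlane (by simp)
  have hpow : ((1 + (0 : ℂ)) ^ 2 / 2) ^ (c - 1) = 2 * ((1 + (0 : ℂ)) ^ 2 / 2) ^ c := by
    rw [cpow_sub _ _ (by norm_num), cpow_one, div_eq_mul_inv, mul_comm]
    norm_num
  refine ((hw.cpow_const hslit).mul hv.cexp).congr_deriv ?_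
  rw [hpow, kappaOneP]
  ring

theorem norm_coeff_zero_kappaOneP (p : ℝ) :
    ‖coeff (kappaOneP p) 0‖ = (2 / Real.exp 1) ^ (1 - 1 / p) / 2 := by
  have h2 : (0 : ℝ) < 2 := two_pos
  rw [coeff, iteratedDeriv_zero, Nat.factorial_zero, Nat.cast_one, div_one, norm_kappaOneP,
    Real.div_rpow h2.le (Real.exp_pos 1).le, Real.exp_one_rpow, Real.rpow_sub h2, Real.rpow_one]
  norm_num
  rw [Real.div_rpow zero_le_one h2.le, Real.one_rpow, ← neg_sub, Real.exp_neg]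
  field_simp

theorem norm_coeff_one_kappaOneP (p : ℝ) :
    ‖coeff (kappaOneP p) 1‖ = (2 / Real.exp 1) ^ (1 - 1 / p) := by
  have hderiv : coeff (kappaOneP p) 1 = 2 * coeff (kappaOneP p) 0 := by
    rw [coeff, coeff, iteratedDeriv_one, (hasDerivAt_kappaOneP_zero p).deriv, iteratedDeriv_zero]
    simp
  rw [hderiv, norm_mul, Complex.norm_two, norm_coeff_zero_kappaOneP]
  ring

theorem half_lt_sq_norm_coeff_one_kappaOneP {p : ℝ} (hp : 0 ≤ p) :
    1 / 2 < ‖coeff (kappaOneP p) 1‖ ^ 2 := by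
  have he : 2 < Real.exp 1 := by linarith [Real.exp_one_gt_d9]
  have hbase : 0 < 2 / Real.exp 1 := by positivity
  have hexp : 1 - 1 / p ≤ 1 := by
    have : 0 ≤ 1 / p := by positivity
    linarith
  rw [norm_coeff_one_kappaOneP]
  calc 1 / 2 < (2 / Real.exp 1) ^ 2 := by
        rw [div_pow, lt_div_iff₀ (by positivity)]
        nlinarith [Real.exp_one_lt_d9]
    _ = ((2 / Real.exp 1) ^ (1 : ℝ)) ^ 2 := by rw [Real.rpow_one]
    _ ≤ ((2 / Real.exp 1) ^ (1 - 1 / p)) ^ 2 := pow_le_pow_left₀ (by positivity)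
        (Real.rpow_le_rpow_of_exponent_ge hbase ((div_lt_one (by positivity)).2 he).le hexp) 2

theorem sum_range_sq_norm_coeff_kappaOneP_le_one {p : ℝ} (hp : 2 ≤ p) (N : ℕ) :
    ∑ n ∈ Finset.range N, ‖coeff (kappaOneP p) n‖ ^ 2 ≤ 1 := by
  have hr : ∀ r ∈ Ioo (0 : ℝ) 1,
      ∑ n ∈ Finset.range N, ‖coeff (kappaOneP p) n‖ ^ 2 * r ^ (2 * n) ≤ 1 := fun r hr =>
    (sum_range_sq_norm_coeff_mul_pow_le_circleAverage hr.1
      ((differentiableOn_kappaOneP p).mono (closedBall_subset_ball hr.2)) N).trans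
      (circleAverage_sq_norm_kappaOneP_le_one hp hr.1 hr.2)
  have hcont : Continuous fun r : ℝ =>
      ∑ n ∈ Finset.range N, ‖coeff (kappaOneP p) n‖ ^ 2 * r ^ (2 * n) := by fun_prop
  have hlim := hcont.continuousWithinAt.closure_le (s := Ioo 0 1) (x := 1)
    (by simp [closure_Ioo]) continuousWithinAt_const hr
  simpa using hlim

/-- for `p ≥ 2`, the Taylor coefficients `cₙ⁰` of `κ_{1,p}` satisfy
`|c₁⁰| = (2/e)^{1-1/p}` and `Σ_{n≥2} |cₙ⁰|² < 1/2 < |c₁⁰|²`. -/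
theorem stmt16 (p : ℝ) (hp : 2 ≤ p) :
    ‖coeff (kappaOneP p) 1‖ = (2 / Real.exp 1) ^ (1 - 1 / p) ∧
    Summable (fun n : ℕ => ‖coeff (kappaOneP p) (n + 2)‖ ^ 2) ∧
    (∑' n : ℕ, ‖coeff (kappaOneP p) (n + 2)‖ ^ 2) < 1 / 2 ∧
    (1 / 2 : ℝ) < ‖coeff (kappaOneP p) 1‖ ^ 2 := by
  have hpartial := sum_range_sq_norm_coeff_kappaOneP_le_one hp
  have hsum : Summable fun n => ‖coeff (kappaOneP p) n‖ ^ 2 :=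
    summable_of_sum_range_le (fun _ => by positivity) hpartial
  have htotal := hsum.tsum_le_of_sum_range_le hpartial
  have hsplit := hsum.sum_add_tsum_nat_add 2
  rw [Finset.sum_range_succ, Finset.sum_range_one, norm_coeff_zero_kappaOneP,
    ← norm_coeff_one_kappaOneP] at hsplit
  have hc1 := half_lt_sq_norm_coeff_one_kappaOneP (by linarith : (0 : ℝ) ≤ p)
  refine ⟨norm_coeff_one_kappaOneP p, (summable_nat_add_iff 2).2 hsum, ?_, hc1⟩
  nlinarith
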